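/- arXiv:2603.15111 — 3 statements merged into one kernel-verified Lean document; each statement's English description precedes it below -/
import Mathlib

section
/- Let p ≤ n be positive integers, let G ∈ ℍ^{n×n} be Hermitian positive definite, let X ∈ ℍ^{n×p} satisfy XᴴGX = I_p, and let X⊥ ∈ ℍ^{n×(n−p)} satisfy X⊥ᴴGX⊥ = I_{n−p} and XᴴGX⊥ = 0. Then the set {ξ ∈ ℍ^{n×p} | ξᴴGX + XᴴGξ = 0} equals the set {XB + X⊥C | B ∈ ℍ^{p×p} skew-Hermitian, C ∈ ℍ^{(n−p)×p}}. -/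
open Matrix
open scoped Quaternion

/-!
The `G`-orthonormality relations say that the square matrix `[Xᴴ G; X⊥ᴴ G]` is a left inverse
of `[X X⊥]`. Matrices over a division ring are Dedekind-finite, so it is also a right inverse,
which is the completeness relation `X Xᴴ G + X⊥ X⊥ᴴ G = 1`. Hence every `ξ` decomposes as
`X (Xᴴ G ξ) + X⊥ (X⊥ᴴ G ξ)`, and, as `ξᴴ G X = (Xᴴ G ξ)ᴴ`, the tangency condition says exactly
that the coefficient `B = Xᴴ G ξ` is skew-Hermitian.
-/

namespace Matrix

variable {R : Type*} [Ring R] [StarRing R] {n m k l : Type*} [Fintype n]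

theorem IsHermitian.conjTranspose_conjTranspose_mul_mul {G : Matrix n n R} (hG : G.IsHermitian)
    (X : Matrix n m R) (Y : Matrix n l R) : (Xᴴ * G * Y)ᴴ = Yᴴ * G * X := by
  rw [conjTranspose_mul, conjTranspose_mul, conjTranspose_conjTranspose, hG.eq, Matrix.mul_assoc]

theorem IsHermitian.conjTranspose_mul_mul_add_eq_zero_iff {G : Matrix n n R}
    (hG : G.IsHermitian) (X ξ : Matrix n m R) :
    ξᴴ * G * X + Xᴴ * G * ξ = 0 ↔ (Xᴴ * G * ξ)ᴴ = -(Xᴴ * G * ξ) := by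
  rw [hG.conjTranspose_conjTranspose_mul_mul, add_eq_zero_iff_eq_neg]

theorem conjTranspose_mul_mul_mul_add_mul {G : Matrix n n R} {X : Matrix n m R}
    {Y : Matrix n k R} [Fintype m] [Fintype k] [DecidableEq m] (hX : Xᴴ * G * X = 1)
    (hXY : Xᴴ * G * Y = 0) (B : Matrix m l R) (C : Matrix k l R) :
    Xᴴ * G * (X * B + Y * C) = B := by
  rw [Matrix.mul_add, ← Matrix.mul_assoc, ← Matrix.mul_assoc, hX, hXY, Matrix.one_mul,
    Matrix.zero_mul, add_zero]

theorem mul_conjTranspose_mul_add_mul_conjTranspose_mul_eq_one [IsStablyFiniteRing R]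
    [Fintype m] [Fintype k] [DecidableEq n] [DecidableEq m] [DecidableEq k] (e : m ⊕ k ≃ n)
    {G : Matrix n n R} (hG : G.IsHermitian) {X : Matrix n m R} {Y : Matrix n k R}
    (hX : Xᴴ * G * X = 1) (hY : Yᴴ * G * Y = 1) (hXY : Xᴴ * G * Y = 0) :
    X * (Xᴴ * G) + Y * (Yᴴ * G) = 1 := by
  have hYX : Yᴴ * G * X = 0 := by
    rw [← hG.conjTranspose_conjTranspose_mul_mul, hXY, conjTranspose_zero]
  have hleft : fromRows (Xᴴ * G) (Yᴴ * G) * fromCols X Y = 1 := by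
    rw [fromRows_mul_fromCols, hX, hY, hXY, hYX, fromBlocks_one]
  rw [← fromCols_mul_fromRows]
  exact (mul_eq_one_comm_of_equiv e).mp hleft

end Matrix

theorem tangentSpace_generalized_quaternionic_stiefel_general (n p : ℕ) (hpn : p ≤ n)
    (G : Matrix (Fin n) (Fin n) ℍ[ℝ]) (hG : Gᴴ = G)
    (X : Matrix (Fin n) (Fin p) ℍ[ℝ]) (hX : Xᴴ * G * X = 1)
    (Xperp : Matrix (Fin n) (Fin (n - p)) ℍ[ℝ])
    (hXperp : Xperpᴴ * G * Xperp = 1) (hXXperp : Xᴴ * G * Xperp = 0) :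
    {ξ : Matrix (Fin n) (Fin p) ℍ[ℝ] | ξᴴ * G * X + Xᴴ * G * ξ = 0} =
      {ξ : Matrix (Fin n) (Fin p) ℍ[ℝ] |
        ∃ (B : Matrix (Fin p) (Fin p) ℍ[ℝ]) (C : Matrix (Fin (n - p)) (Fin p) ℍ[ℝ]),
          Bᴴ = -B ∧ ξ = X * B + Xperp * C} := by
  have hG : G.IsHermitian := hG
  have hcomplete := mul_conjTranspose_mul_add_mul_conjTranspose_mul_eq_one
    (finSumFinEquiv.trans (finCongr (Nat.add_sub_cancel' hpn))) hG hX hXperp hXXperp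
  ext ξ
  simp only [Set.mem_ofPred_eq, hG.conjTranspose_mul_mul_add_eq_zero_iff]
  constructor
  · intro hskew
    refine ⟨Xᴴ * G * ξ, Xperpᴴ * G * ξ, hskew, ?_⟩
    simpa only [Matrix.add_mul, Matrix.one_mul, Matrix.mul_assoc] using
      (congrArg (· * ξ) hcomplete).symm
  · rintro ⟨B, C, hB, rfl⟩
    rwa [conjTranspose_mul_mul_mul_add_mul hX hXXperp]

/-- The tangent space of the generalized quaternionic Stiefel manifold at `X`,
`{ξ | ξᴴGX + XᴴGξ = 0}`, equals `{XB + X⊥C | B skew-Hermitian, C arbitrary}`. -/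
theorem tangentSpace_generalized_quaternionic_stiefel (n p : ℕ) (hp : 0 < p) (hpn : p ≤ n)
    (G : Matrix (Fin n) (Fin n) ℍ[ℝ]) (hG : Gᴴ = G)
    (hGpd : ∀ x : Fin n → ℍ[ℝ], x ≠ 0 → 0 < (star x ⬝ᵥ G *ᵥ x).re)
    (X : Matrix (Fin n) (Fin p) ℍ[ℝ]) (hX : Xᴴ * G * X = 1)
    (Xperp : Matrix (Fin n) (Fin (n - p)) ℍ[ℝ])
    (hXperp : Xperpᴴ * G * Xperp = 1) (hXXperp : Xᴴ * G * Xperp = 0) :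
    {ξ : Matrix (Fin n) (Fin p) ℍ[ℝ] | ξᴴ * G * X + Xᴴ * G * ξ = 0} =
      {ξ : Matrix (Fin n) (Fin p) ℍ[ℝ] |
        ∃ (B : Matrix (Fin p) (Fin p) ℍ[ℝ]) (C : Matrix (Fin (n - p)) (Fin p) ℍ[ℝ]),
          Bᴴ = -B ∧ ξ = X * B + Xperp * C} :=
  tangentSpace_generalized_quaternionic_stiefel_general n p hpn G hG X hX Xperp hXperp hXXperp
end

section
/- Let p ≤ n be positive integers, let G ∈ ℍ^{n×n} and M ∈ ℍ^{n×n} be Hermitian positive definite, and let X ∈ ℍ^{n×p} satisfy XᴴGX = I_p. Then a matrix Y ∈ ℍ^{n×p} satisfies re(tr(ξᴴMY)) = 0 for every ξ ∈ ℍ^{n×p} with ξᴴGX + XᴴGξ = 0 if and only if there exists a Hermitian matrix S ∈ ℍ^{p×p} with MY = GXS. -/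
open Matrix
open scoped Quaternion

/-!
Pair quaternionic matrices by `⟨A, B⟩ = re tr(AᴴB)`; although `ℍ` is not commutative,
`re (ab) = re (ba)`, so `re tr` is cyclic and `⟨A, A⟩ = ∑ |Aᵢⱼ|²` is definite. Put `S = XᴴMY`.
For every `Z`, `Z - X XᴴGZ` is tangent at `X` and pairs with `MY` to `⟨Z, MY - GXS⟩`, so
`MY = GXS`. For every skew-Hermitian `K`, `XK` is tangent and pairs with `MY` to `⟨K, S⟩`; taking
`K = S - Sᴴ` shows that `S` is Hermitian. Conversely, if `MY = GXS` then a tangent `ξ` pairs with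
`MY` to `re tr(AS)` with `A = ξᴴGX` skew-Hermitian, and `re tr(AS) = -re tr(AS)` by cyclicity and
conjugation.
-/

namespace Quaternion

variable {R ι : Type*} [CommRing R]

theorem re_sum (s : Finset ι) (f : ι → ℍ[R]) : (∑ i ∈ s, f i).re = ∑ i ∈ s, (f i).re :=
  map_sum (QuaternionAlgebra.reₗ (-1 : R) 0 (-1)) f s

theorem re_mul_comm (a b : ℍ[R]) : (a * b).re = (b * a).re := by
  simp only [re_mul]
  ring

end Quaternion

namespace Matrix

variable {m n : Type*} [Fintype m]

section QuaternionTrace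

variable {R : Type*} [CommRing R] [Fintype n]

theorem re_trace_mul_comm (A : Matrix m n ℍ[R]) (B : Matrix n m ℍ[R]) :
    (A * B).trace.re = (B * A).trace.re := by
  simp only [trace, diag, mul_apply, Quaternion.re_sum]
  rw [Finset.sum_comm]
  simp only [Quaternion.re_mul_comm]

theorem re_trace_conjTranspose (A : Matrix n n ℍ[R]) : Aᴴ.trace.re = A.trace.re := by
  rw [trace_conjTranspose, Quaternion.re_star]

theorem re_trace_conjTranspose_mul_self (A : Matrix m n ℍ[R]) :
    (Aᴴ * A).trace.re = ∑ j, ∑ i, Quaternion.normSq (A i j) := by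
  simp only [trace, diag, mul_apply, conjTranspose_apply, Quaternion.re_sum,
    Quaternion.star_mul_self, Quaternion.re_coe]

section Ordered

variable [LinearOrder R] [IsStrictOrderedRing R]

theorem re_trace_conjTranspose_mul_self_eq_zero_iff {A : Matrix m n ℍ[R]} :
    (Aᴴ * A).trace.re = 0 ↔ A = 0 := by
  have hnonneg : ∀ j, 0 ≤ ∑ i, Quaternion.normSq (A i j) := fun j =>
    Finset.sum_nonneg fun i _ => Quaternion.normSq_nonneg
  simp [re_trace_conjTranspose_mul_self, Fintype.sum_eq_zero_iff_of_nonneg, Pi.le_def, hnonneg,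
    funext_iff, ← Matrix.ext_iff, forall_comm (α := m)]

theorem eq_zero_of_forall_re_trace_conjTranspose_mul_eq_zero {W : Matrix m n ℍ[R]}
    (h : ∀ Z : Matrix m n ℍ[R], (Zᴴ * W).trace.re = 0) : W = 0 :=
  re_trace_conjTranspose_mul_self_eq_zero_iff.mp (h W)

theorem re_trace_mul_eq_zero_of_skew_of_hermitian {A S : Matrix n n ℍ[R]} (hA : Aᴴ = -A)
    (hS : S.IsHermitian) : (A * S).trace.re = 0 := by
  rw [← neg_eq_self]
  calc -(A * S).trace.re = (S * -A).trace.re := by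
        rw [re_trace_mul_comm, mul_neg, trace_neg, Quaternion.re_neg]
    _ = (A * S)ᴴ.trace.re := by rw [conjTranspose_mul, hA, hS]
    _ = (A * S).trace.re := re_trace_conjTranspose _

variable [DecidableEq n]

theorem isHermitian_of_forall_skew_re_trace_mul_eq_zero {S : Matrix n n ℍ[R]}
    (h : ∀ K : Matrix n n ℍ[R], Kᴴ = -K → (Kᴴ * S).trace.re = 0) : S.IsHermitian := by
  set K := S - Sᴴ with hK
  have hK_skew : Kᴴ = -K := by
    rw [hK, conjTranspose_sub, conjTranspose_conjTranspose, neg_sub]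
  have hsum : (Kᴴ * (S + Sᴴ)).trace.re = 0 :=
    re_trace_mul_eq_zero_of_skew_of_hermitian
      (by rw [conjTranspose_conjTranspose, hK_skew, neg_neg])
      (isHermitian_add_transpose_self S)
  have hK0 : (Kᴴ * K).trace.re = 0 :=
    calc (Kᴴ * K).trace.re
        = (Kᴴ * S).trace.re + (Kᴴ * S).trace.re - (Kᴴ * (S + Sᴴ)).trace.re := by
          rw [← Quaternion.re_add, ← Quaternion.re_sub, ← trace_add, ← trace_sub, ← mul_add,
            ← mul_sub, hK]
          abel_nf
      _ = 0 := by rw [h K hK_skew, hsum]; simp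
  exact (sub_eq_zero.mp (re_trace_conjTranspose_mul_self_eq_zero_iff.mp hK0)).symm

end Ordered

end QuaternionTrace

section Stiefel

variable {α : Type*} [Ring α] [StarRing α] {G : Matrix m m α} {X ξ : Matrix m n α}

def IsStiefelTangent (G : Matrix m m α) (X ξ : Matrix m n α) : Prop :=
  ξᴴ * G * X + Xᴴ * G * ξ = 0

theorem IsHermitian.conjTranspose_conjTranspose_mul_mul_s4 {k l : Type*} (hG : G.IsHermitian)
    (A : Matrix m k α) (B : Matrix m l α) :
    (Aᴴ * G * B)ᴴ = Bᴴ * G * A := by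
  rw [conjTranspose_mul, conjTranspose_mul, hG.eq, conjTranspose_conjTranspose, Matrix.mul_assoc]

theorem IsStiefelTangent.conjTranspose_mul_mul_eq_neg (hG : G.IsHermitian)
    (hξ : IsStiefelTangent G X ξ) : (ξᴴ * G * X)ᴴ = -(ξᴴ * G * X) := by
  rw [hG.conjTranspose_conjTranspose_mul_mul_s4]
  exact eq_neg_of_add_eq_zero_right hξ

theorem isStiefelTangent_of_mul_eq_zero (hG : G.IsHermitian) (h : Xᴴ * G * ξ = 0) :
    IsStiefelTangent G X ξ := by
  rw [IsStiefelTangent, ← hG.conjTranspose_conjTranspose_mul_mul_s4, h, conjTranspose_zero, add_zero]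

variable [Fintype n]

theorem conjTranspose_sub_mul_mul (hG : G.IsHermitian) (Z W : Matrix m n α) :
    (Z - X * (Xᴴ * G * Z))ᴴ * W = Zᴴ * (W - G * X * (Xᴴ * W)) := by
  simp only [conjTranspose_sub, conjTranspose_mul, conjTranspose_conjTranspose, hG.eq,
    Matrix.sub_mul, Matrix.mul_sub, Matrix.mul_assoc]

variable [DecidableEq n]

theorem isStiefelTangent_mul_skew (hX : Xᴴ * G * X = 1) {K : Matrix n n α} (hK : Kᴴ = -K) :
    IsStiefelTangent G X (X * K) := by
  rw [IsStiefelTangent, conjTranspose_mul, Matrix.mul_assoc Kᴴ, Matrix.mul_assoc Kᴴ,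
    ← Matrix.mul_assoc (Xᴴ * G) X K, hX, Matrix.mul_one, Matrix.one_mul, hK, neg_add_cancel]

theorem isStiefelTangent_sub_mul (hG : G.IsHermitian) (hX : Xᴴ * G * X = 1) (Z : Matrix m n α) :
    IsStiefelTangent G X (Z - X * (Xᴴ * G * Z)) := by
  refine isStiefelTangent_of_mul_eq_zero hG ?_
  rw [Matrix.mul_sub, ← Matrix.mul_assoc, hX, Matrix.one_mul, sub_self]

end Stiefel

end Matrix

theorem normalSpace_generalized_quaternionic_stiefel_general (n p : ℕ)
    (G M : Matrix (Fin n) (Fin n) ℍ[ℝ]) (hG : Gᴴ = G)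
    (X : Matrix (Fin n) (Fin p) ℍ[ℝ]) (hX : Xᴴ * G * X = 1)
    (Y : Matrix (Fin n) (Fin p) ℍ[ℝ]) :
    (∀ ξ : Matrix (Fin n) (Fin p) ℍ[ℝ], ξᴴ * G * X + Xᴴ * G * ξ = 0 →
        ((ξᴴ * (M * Y)).trace).re = 0) ↔
      ∃ S : Matrix (Fin p) (Fin p) ℍ[ℝ], Sᴴ = S ∧ M * Y = G * X * S := by
  constructor
  · intro h
    refine ⟨Xᴴ * (M * Y), ?_, ?_⟩
    · refine isHermitian_of_forall_skew_re_trace_mul_eq_zero fun K hK => ?_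
      simpa only [conjTranspose_mul, Matrix.mul_assoc] using
        h (X * K) (isStiefelTangent_mul_skew hX hK)
    · rw [← sub_eq_zero]
      refine eq_zero_of_forall_re_trace_conjTranspose_mul_eq_zero fun Z => ?_
      rw [← conjTranspose_sub_mul_mul hG]
      exact h _ (isStiefelTangent_sub_mul hG hX Z)
  · rintro ⟨S, hS, hMY⟩ ξ hξ
    rw [hMY, ← Matrix.mul_assoc, ← Matrix.mul_assoc]
    exact re_trace_mul_eq_zero_of_skew_of_hermitian
      (IsStiefelTangent.conjTranspose_mul_mul_eq_neg hG hξ) hS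

/-- Characterization of the normal space of the generalized quaternionic Stiefel
manifold at `X` with respect to the metric `⟨ξ,η⟩ = re(tr(ξᴴMη))`:
`Y` is orthogonal to every tangent vector iff `MY = GXS` for some Hermitian `S`. -/
theorem normalSpace_generalized_quaternionic_stiefel (n p : ℕ) (hp : 0 < p) (hpn : p ≤ n)
    (G M : Matrix (Fin n) (Fin n) ℍ[ℝ]) (hG : Gᴴ = G) (hM : Mᴴ = M)
    (hGpd : ∀ x : Fin n → ℍ[ℝ], x ≠ 0 → 0 < (star x ⬝ᵥ G *ᵥ x).re)
    (hMpd : ∀ x : Fin n → ℍ[ℝ], x ≠ 0 → 0 < (star x ⬝ᵥ M *ᵥ x).re)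
    (X : Matrix (Fin n) (Fin p) ℍ[ℝ]) (hX : Xᴴ * G * X = 1)
    (Y : Matrix (Fin n) (Fin p) ℍ[ℝ]) :
    (∀ ξ : Matrix (Fin n) (Fin p) ℍ[ℝ], ξᴴ * G * X + Xᴴ * G * ξ = 0 →
        ((ξᴴ * (M * Y)).trace).re = 0) ↔
      ∃ S : Matrix (Fin p) (Fin p) ℍ[ℝ], Sᴴ = S ∧ M * Y = G * X * S :=
  normalSpace_generalized_quaternionic_stiefel_general n p G M hG X hX Y
end

section
/- Let p ≤ n be positive integers, let G ∈ ℍ^{n×n} be Hermitian positive definite, let X ∈ ℍ^{n×p} satisfy XᴴGX = I_p, and let η ∈ ℍ^{n×p} satisfy ηᴴGX + XᴴGη = 0. Then: (i) (X+η)ᴴG(X+η) = I_p + ηᴴGη; (ii) the matrix I_p + ηᴴGη is Hermitian positive definite; and (iii) consequently X + η has full right column rank, i.e., for x ∈ ℍᵖ, (X+η)x = 0 implies x = 0. -/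
open Matrix
open scoped Quaternion

/-- quadratic form transport along a matrix -/
lemma quad_form_mulVec {n p : ℕ} (G : Matrix (Fin n) (Fin n) ℍ[ℝ])
    (A : Matrix (Fin n) (Fin p) ℍ[ℝ]) (x : Fin p → ℍ[ℝ]) :
    star x ⬝ᵥ (Aᴴ * G * A) *ᵥ x = star (A *ᵥ x) ⬝ᵥ G *ᵥ (A *ᵥ x) := by
  simp [← mulVec_mulVec, dotProduct_mulVec, star_mulVec, vecMul_vecMul]

lemma quat_dot_self_pos {p : ℕ} (x : Fin p → ℍ[ℝ]) (hx : x ≠ 0) :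
    0 < (star x ⬝ᵥ x).re := by
  obtain ⟨i, hi⟩ := Function.ne_iff.mp hx
  have : (star x ⬝ᵥ x).re = ∑ j, Quaternion.normSq (x j) := by
    simp [dotProduct, Quaternion.star_mul_self]
    induction (Finset.univ : Finset (Fin p)) using Finset.induction with
    | empty => simp
    | insert h ih => simp_all [Quaternion.re_add]
  rw [this]
  exact Finset.sum_pos' (fun j _ => Quaternion.normSq_nonneg)
    ⟨i, Finset.mem_univ i, lt_of_le_of_ne Quaternion.normSq_nonneg
      (fun h => hi (Quaternion.normSq_eq_zero.mp h.symm))⟩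

/-- For `X` on the generalized quaternionic Stiefel manifold and a tangent vector `η`:
(i) `(X+η)ᴴG(X+η) = I + ηᴴGη`; (ii) `I + ηᴴGη` is Hermitian positive definite;
(iii) `X + η` has full right column rank. -/
theorem retraction_full_rank_generalized_quaternionic_stiefel
    (n p : ℕ) (hp : 0 < p) (hpn : p ≤ n)
    (G : Matrix (Fin n) (Fin n) ℍ[ℝ]) (hG : Gᴴ = G)
    (hGpd : ∀ x : Fin n → ℍ[ℝ], x ≠ 0 → 0 < (star x ⬝ᵥ G *ᵥ x).re)
    (X : Matrix (Fin n) (Fin p) ℍ[ℝ]) (hX : Xᴴ * G * X = 1)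
    (η : Matrix (Fin n) (Fin p) ℍ[ℝ]) (hη : ηᴴ * G * X + Xᴴ * G * η = 0) :
    (X + η)ᴴ * G * (X + η) = 1 + ηᴴ * G * η ∧
      ((1 + ηᴴ * G * η)ᴴ = 1 + ηᴴ * G * η ∧
        ∀ x : Fin p → ℍ[ℝ], x ≠ 0 → 0 < (star x ⬝ᵥ (1 + ηᴴ * G * η) *ᵥ x).re) ∧
      ∀ x : Fin p → ℍ[ℝ], (X + η) *ᵥ x = 0 → x = 0 := by
  have hGnn : ∀ y : Fin n → ℍ[ℝ], 0 ≤ (star y ⬝ᵥ G *ᵥ y).re := by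
    intro y
    by_cases hy : y = 0
    · simp [hy]
    · exact le_of_lt (hGpd y hy)
  have hi : (X + η)ᴴ * G * (X + η) = 1 + ηᴴ * G * η := by
    have expand : (X + η)ᴴ * G * (X + η)
        = Xᴴ * G * X + (ηᴴ * G * X + Xᴴ * G * η) + ηᴴ * G * η := by
      simp only [conjTranspose_add, Matrix.add_mul, Matrix.mul_add]
      abel
    rw [expand, hX, hη, add_zero]
  have hpos : ∀ x : Fin p → ℍ[ℝ], x ≠ 0 →
      0 < (star x ⬝ᵥ (1 + ηᴴ * G * η) *ᵥ x).re := by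
    intro x hx
    have : star x ⬝ᵥ (1 + ηᴴ * G * η) *ᵥ x
        = star x ⬝ᵥ x + star (η *ᵥ x) ⬝ᵥ G *ᵥ (η *ᵥ x) := by
      rw [← quad_form_mulVec G η x]
      simp [add_mulVec, dotProduct_add]
    rw [this, Quaternion.re_add]
    exact add_pos_of_pos_of_nonneg (quat_dot_self_pos x hx) (hGnn _)
  refine ⟨hi, ⟨?_, hpos⟩, ?_⟩
  · simp [conjTranspose_add, Matrix.conjTranspose_mul, hG, Matrix.mul_assoc]
  · intro x hAx
    by_contra hx
    have h1 := hpos x hx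
    rw [← hi, quad_form_mulVec, hAx] at h1
    simp at h1
end
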